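/- arXiv:1912.00408 — 2 statements merged into one kernel-verified Lean document; each statement's English description precedes it below -/
import Mathlib

section
/- Let Δ ⊆ ℝⁿ (n ≥ 2) be a Delzant polytope and let F = {x ∈ ℝⁿ : xₙ = a} be a parallel hyperplane for Δ that meets the interior of Δ and contains no edge of Δ. Let G be a facet of Δ (an (n−1)-dimensional face) contained in a hyperplane {x ∈ ℝⁿ : ⟨x,u⟩ = λ} whose normal vector u satisfies ⟨u,eₙ⟩ ≠ 0. Then G ∩ F = ∅; consequently, since Δ is compact, the slice F ∩ Δ has positive distance from G. -/
noncomputable section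

/-- `E` is an edge (one-dimensional face) of `Δ`: an extreme convex subset whose
affine span has one-dimensional direction. -/
def IsEdge {m : ℕ} (Δ E : Set (Fin m → ℝ)) : Prop :=
  IsExtreme ℝ Δ E ∧ Convex ℝ E ∧ Module.finrank ℝ (affineSpan ℝ E).direction = 1

/-- `Δ` is a Delzant polytope in `ℝ^m` (with respect to the lattice `ℤ^m`):
a compact convex polytope (convex hull of finitely many points) of full dimension `m`
such that at each vertex `v` (extreme point) there is a family of integer vectors
forming a `ℤ`-basis of `ℤ^m` whose directions realize the edges at `v`, and every
edge of `Δ` through `v` is one of them (so `v` is simple with Delzant edge data). -/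
def IsDelzant {m : ℕ} (Δ : Set (Fin m → ℝ)) : Prop :=
  (∃ S : Finset (Fin m → ℝ), Δ = convexHull ℝ (S : Set (Fin m → ℝ))) ∧
  affineSpan ℝ Δ = ⊤ ∧
  ∀ v ∈ Set.extremePoints ℝ Δ,
    ∃ u : Fin m → (Fin m → ℤ),
      (LinearIndependent ℤ u ∧ Submodule.span ℤ (Set.range u) = ⊤) ∧
      (∀ i : Fin m, ∃ T : ℝ, 0 < T ∧
        IsEdge Δ ((fun t : ℝ => v + t • fun j => (u i j : ℝ)) '' Set.Icc 0 T)) ∧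
      (∀ E : Set (Fin m → ℝ), IsEdge Δ E → v ∈ E →
        ∃ i : Fin m, ∃ T : ℝ, 0 < T ∧
          E = (fun t : ℝ => v + t • fun j => (u i j : ℝ)) '' Set.Icc 0 T)

/-- The hyperplane `{x | x_n = a}` is a parallel hyperplane for `Δ`: it meets `Δ`,
and every edge of `Δ` that meets it without being contained in it is orthogonal to it,
i.e. points of such an edge differ only in the last coordinate. -/
def IsParallelAt {n : ℕ} (Δ : Set (Fin (n + 1) → ℝ)) (a : ℝ) : Prop :=
  (∃ x ∈ Δ, x (Fin.last n) = a) ∧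
  ∀ E : Set (Fin (n + 1) → ℝ), IsEdge Δ E →
    (∃ x ∈ E, x (Fin.last n) = a) → ¬(∀ x ∈ E, x (Fin.last n) = a) →
    ∀ x ∈ E, ∀ y ∈ E, ∀ i : Fin n, x i.castSucc = y i.castSucc

/-- The standard dot product on `ℝ^m`. -/
def dotp {m : ℕ} (u v : Fin m → ℝ) : ℝ := ∑ i, u i * v i

/-!
Suppose the slice `F = {x | x (Fin.last n) = a}` met the facet `G`, take an extreme point `p` of
the compact convex set `G ∩ F`, and let `M` be the smallest face of `Δ` containing `p`. Since `p`
lies in the relative interior of `M ⊆ G`, a horizontal direction of `M` would move `p` inside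
`G ∩ F`; so `M` has none, and `dim M ≤ 1`. Nor is `M` the vertex `{p}`: all `n + 1` edges at a
vertex on `F` would be vertical, which no lattice basis allows. Hence `M` is an edge through `p`
not contained in `F`, so it is vertical, and `⟪·, u⟫` cannot be constant on it since
`u (Fin.last n) ≠ 0`. The positive distance follows because `G`, a face of a polytope, is compact.
-/

open Set Filter Topology

section Convex

variable {E : Type*} [AddCommGroup E] [Module ℝ E] {A B : Set E} {p x : E}

/-- The points of `A` from which the segment through `p` can be prolonged beyond `p` inside `A`.
For convex `A` this is the smallest face of `A` containing `p`, and `p` lies in its relative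
interior. -/
def minimalFace (A : Set E) (p : E) : Set E :=
  {x ∈ A | ∃ ε : ℝ, 0 < ε ∧ p + ε • (p - x) ∈ A}

lemma minimalFace_subset : minimalFace A p ⊆ A := fun _ hx => hx.1

lemma self_mem_minimalFace (hp : p ∈ A) : p ∈ minimalFace A p :=
  ⟨hp, 1, one_pos, by simpa using hp⟩

lemma mem_openSegment_of_mem_minimalFace (hx : x ∈ minimalFace A p) :
    ∃ q ∈ A, p ∈ openSegment ℝ x q := by
  obtain ⟨-, ε, hε, hq⟩ := hx
  refine ⟨_, hq, ε / (1 + ε), 1 / (1 + ε), by positivity, by positivity, by field_simp; ring, ?_⟩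
  match_scalars <;> field_simp; ring

lemma IsExtreme.minimalFace_subset (hB : IsExtreme ℝ A B) (hp : p ∈ B) :
    minimalFace A p ⊆ B := fun _ hx =>
  let ⟨_, hq, hpxq⟩ := mem_openSegment_of_mem_minimalFace hx
  hB.left_mem_of_mem_openSegment hx.1 hq hp hpxq

lemma convex_minimalFace (hA : Convex ℝ A) (hp : p ∈ A) : Convex ℝ (minimalFace A p) := by
  have shrink : ∀ {y : E} {ε δ : ℝ}, p + ε • (p - y) ∈ A → 0 < δ → δ ≤ ε →
      p + δ • (p - y) ∈ A := fun {y ε δ} h hδ hδε => by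
    have hε : 0 < ε := hδ.trans_le hδε
    simpa [smul_smul, div_mul_cancel₀ δ hε.ne'] using
      (hA.starConvex hp).add_smul_mem h (t := δ / ε) (by positivity) (div_le_one_of_le₀ hδε hε.le)
  rintro x ⟨hx, εx, hεx, hqx⟩ y ⟨hy, εy, hεy, hqy⟩ α β hα hβ hαβ
  refine ⟨hA hx hy hα hβ hαβ, min εx εy, lt_min hεx hεy, ?_⟩
  convert hA (shrink hqx (lt_min hεx hεy) (min_le_left _ _))
    (shrink hqy (lt_min hεx hεy) (min_le_right _ _)) hα hβ hαβ using 1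
  rw [← sub_eq_zero]
  obtain rfl := eq_sub_of_add_eq' hαβ
  module

lemma isExtreme_minimalFace (hA : Convex ℝ A) : IsExtreme ℝ A (minimalFace A p) := by
  refine ⟨minimalFace_subset, fun x₁ hx₁ x₂ hx₂ _ ⟨_, ε, hε, hq⟩ ⟨α, β, hα, hβ, hαβ, hx⟩ => ?_⟩
  refine ⟨hx₁, ε * α / (1 + ε * β), by positivity, ?_⟩
  convert hA hx₂ hq (a := ε * β / (1 + ε * β)) (b := 1 / (1 + ε * β)) (by positivity)
    (by positivity) (by field_simp; ring) using 1
  subst hx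
  obtain rfl := eq_sub_of_add_eq hαβ
  match_scalars <;> field_simp <;> ring

lemma eventually_add_smul_sub_mem_minimalFace (hA : Convex ℝ A) (hp : p ∈ A)
    (hx : x ∈ minimalFace A p) : ∀ᶠ t in 𝓝 (0 : ℝ), p + t • (x - p) ∈ minimalFace A p := by
  obtain ⟨hxA, ε, hε, hq⟩ := hx
  have hM := convex_minimalFace hA hp
  have hqM : p + ε • (p - x) ∈ minimalFace A p := ⟨hq, ε⁻¹, inv_pos.2 hε, by
    simpa [smul_smul, inv_mul_cancel₀ hε.ne'] using hxA⟩
  filter_upwards [Ioo_mem_nhds (neg_lt_zero.2 hε) one_pos] with t ⟨htε, ht1⟩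
  rcases le_or_gt 0 t with ht0 | ht0
  · exact hM.add_smul_sub_mem (self_mem_minimalFace hp) ⟨hxA, ε, hε, hq⟩ ⟨ht0, ht1.le⟩
  · convert hM.add_smul_sub_mem (self_mem_minimalFace hp) hqM (t := -t / ε)
      ⟨by have := div_pos (neg_pos.2 ht0) hε; linarith, by rw [div_le_one hε]; linarith⟩ using 2
    rw [add_sub_cancel_left, smul_smul, div_mul_cancel₀ _ hε.ne']
    module

lemma eventually_add_smul_mem_minimalFace (hA : Convex ℝ A) (hp : p ∈ A) {d : E}
    (hd : d ∈ vectorSpan ℝ (minimalFace A p)) :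
    ∀ᶠ t in 𝓝 (0 : ℝ), p + t • d ∈ minimalFace A p := by
  have hM := convex_minimalFace hA hp
  rw [vectorSpan_eq_span_vsub_set_right ℝ (self_mem_minimalFace hp)] at hd
  induction hd using Submodule.span_induction with
  | mem _ hx =>
    obtain ⟨x, hx, rfl⟩ := hx
    exact eventually_add_smul_sub_mem_minimalFace hA hp hx
  | zero => simpa using self_mem_minimalFace hp
  | add d₁ d₂ _ _ h₁ h₂ =>
    have h2 : Tendsto (fun t : ℝ => 2 * t) (𝓝 0) (𝓝 0) := by
      simpa using (continuous_const_mul (2 : ℝ)).tendsto 0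
    filter_upwards [h2.eventually h₁, h2.eventually h₂] with t ht₁ ht₂
    convert hM ht₁ ht₂ (a := 1 / 2) (b := 1 / 2) (by norm_num) (by norm_num) (by norm_num) using 1
    module
  | smul c d _ h =>
    have hc : Tendsto (fun t : ℝ => t * c) (𝓝 0) (𝓝 0) := by
      simpa using (continuous_mul_const c).tendsto 0
    filter_upwards [hc.eventually h] with t ht
    rwa [smul_smul]

lemma eq_zero_of_mem_extremePoints_of_eventually_mem {d : E}
    (hp : p ∈ A.extremePoints ℝ) (h : ∀ᶠ t in 𝓝 (0 : ℝ), p + t • d ∈ A) : d = 0 := by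
  obtain ⟨ε, hε, hball⟩ := Metric.eventually_nhds_iff.1 h
  have hmem : ∀ s : ℝ, |s| < ε → p + s • d ∈ A := fun s hs => hball (by simpa using hs)
  have hseg : p ∈ openSegment ℝ (p + (ε / 2) • d) (p + (-(ε / 2)) • d) :=
    ⟨1 / 2, 1 / 2, by norm_num, by norm_num, by norm_num, by module⟩
  have := hp.2 (hmem _ (by rw [abs_of_pos (by positivity)]; linarith))
    (hmem _ (by rw [abs_neg, abs_of_pos (by positivity)]; linarith)) hseg
  simpa [hε.ne'] using this

lemma IsExtreme.eq_convexHull_inter {S : Set E} (hB : IsExtreme ℝ (convexHull ℝ S) B)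
    (hBconv : Convex ℝ B) : B = convexHull ℝ (S ∩ B) := by
  refine (convexHull_min inter_subset_right hBconv).antisymm' fun x hxB => ?_
  have hout : convexHull ℝ (S \ B) ⊆ convexHull ℝ S \ B :=
    convexHull_min (fun y hy => ⟨subset_convexHull ℝ S hy.1, hy.2⟩)
      (hB.convex_sdiff (convex_convexHull ℝ S))
  have hxS := hB.subset hxB
  rw [← inter_union_sdiff S B] at hxS
  rcases (S ∩ B).eq_empty_or_nonempty with hin | hin
  · rw [hin, empty_union] at hxS
    exact absurd hxB (hout hxS).2
  rcases (S \ B).eq_empty_or_nonempty with hdiff | hdiff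
  · rwa [hdiff, union_empty] at hxS
  rw [convexHull_union hin hdiff, mem_convexJoin] at hxS
  obtain ⟨a, ha, b, hb, hxab⟩ := hxS
  rw [← insert_endpoints_openSegment, mem_insert_iff, mem_insert_iff] at hxab
  rcases hxab with rfl | rfl | hxab
  · exact ha
  · exact absurd hxB (hout hb).2
  · exact absurd (hB.right_mem_of_mem_openSegment ((convexHull_mono inter_subset_left) ha)
      (hout hb).1 hxB hxab) (hout hb).2

end Convex

lemma finrank_le_one_of_forall_eq_zero {K V : Type*} [Field K] [AddCommGroup V] [Module K V]
    (f : V →ₗ[K] K) {L : Submodule K V} (hL : ∀ d ∈ L, f d = 0 → d = 0) :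
    Module.finrank K L ≤ 1 := by
  have hinj : Function.Injective (f.domRestrict L) := by
    rw [← LinearMap.ker_eq_bot, LinearMap.ker_eq_bot']
    exact fun d hd => Subtype.ext (hL d d.2 hd)
  simpa using LinearMap.finrank_le_finrank_of_injective hinj

lemma span_ne_top_of_forall_castSucc_eq_zero {R ι : Type*} [Semiring R] [Nontrivial R] {n : ℕ}
    (hn : 1 ≤ n) (u : ι → Fin (n + 1) → R) (hu : ∀ i (j : Fin n), u i j.castSucc = 0) :
    Submodule.span R (range u) ≠ ⊤ := by
  set j : Fin (n + 1) := Fin.castSucc ⟨0, hn⟩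
  have hle : Submodule.span R (range u) ≤ LinearMap.ker (LinearMap.proj j) :=
    Submodule.span_le.2 (by rintro _ ⟨i, rfl⟩; exact hu i _)
  intro htop
  have := hle (htop ▸ Submodule.mem_top : Pi.single j (1 : R) ∈ _)
  simp at this

lemma dotp_sub_dotp_of_castSucc_eq {n : ℕ} {x y : Fin (n + 1) → ℝ} (u : Fin (n + 1) → ℝ)
    (h : ∀ i : Fin n, x i.castSucc = y i.castSucc) :
    dotp x u - dotp y u = (x (Fin.last n) - y (Fin.last n)) * u (Fin.last n) := by
  simp only [dotp, Fin.sum_univ_castSucc, h]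
  ring

lemma IsDelzant.convex {m : ℕ} {Δ : Set (Fin m → ℝ)} (hΔ : IsDelzant Δ) : Convex ℝ Δ := by
  obtain ⟨S, rfl⟩ := hΔ.1
  exact convex_convexHull ℝ _

lemma IsDelzant.isCompact_of_isExtreme {m : ℕ} {Δ G : Set (Fin m → ℝ)} (hΔ : IsDelzant Δ)
    (hG : IsExtreme ℝ Δ G) (hGconv : Convex ℝ G) : IsCompact G := by
  obtain ⟨S, rfl⟩ := hΔ.1
  rw [hG.eq_convexHull_inter hGconv]
  exact (S.finite_toSet.inter_of_left G).isCompact_convexHull ℝ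

lemma isEdge_minimalFace {m : ℕ} {Δ : Set (Fin m → ℝ)} (hΔ : Convex ℝ Δ) {p v : Fin m → ℝ}
    (hp : p ∈ Δ) (f : (Fin m → ℝ) →ₗ[ℝ] ℝ)
    (hf : ∀ d ∈ vectorSpan ℝ (minimalFace Δ p), f d = 0 → d = 0)
    (hv : v ∈ minimalFace Δ p) (hvp : v ≠ p) : IsEdge Δ (minimalFace Δ p) := by
  refine ⟨isExtreme_minimalFace hΔ, convex_minimalFace hΔ hp, ?_⟩
  rw [direction_affineSpan]
  refine (finrank_le_one_of_forall_eq_zero f hf).antisymm (Submodule.one_le_finrank_iff.2 ?_)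
  intro h
  have := vsub_mem_vectorSpan ℝ hv (self_mem_minimalFace hp)
  rw [h, Submodule.mem_bot, vsub_eq_sub, sub_eq_zero] at this
  exact hvp this

section DelzantSlice

variable {n : ℕ} {Δ : Set (Fin (n + 1) → ℝ)} {a : ℝ}

lemma IsDelzant.last_ne_of_mem_extremePoints (hn : 1 ≤ n) (hΔ : IsDelzant Δ)
    (hpar : IsParallelAt Δ a) (hnoedge : ∀ E, IsEdge Δ E → ¬∀ x ∈ E, x (Fin.last n) = a)
    {v : Fin (n + 1) → ℝ} (hv : v ∈ Δ.extremePoints ℝ) : v (Fin.last n) ≠ a := by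
  intro hva
  obtain ⟨u, ⟨-, hspan⟩, hedges, -⟩ := hΔ.2.2 v hv
  refine span_ne_top_of_forall_castSucc_eq_zero hn u (fun i j => ?_) hspan
  obtain ⟨T, hT, hE⟩ := hedges i
  have hv0 : v ∈ (fun t : ℝ => v + t • fun k => (u i k : ℝ)) '' Icc 0 T :=
    ⟨0, ⟨le_rfl, hT.le⟩, by simp⟩
  have hvT := mem_image_of_mem (fun t : ℝ => v + t • fun k => (u i k : ℝ)) (right_mem_Icc.2 hT.le)
  simpa [hT.ne'] using hpar.2 _ hE ⟨v, hv0, hva⟩ (hnoedge _ hE) _ hvT v hv0 j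

lemma extremePoints_facet_inter_slice_eq_empty (hn : 1 ≤ n) (hΔ : IsDelzant Δ)
    (hpar : IsParallelAt Δ a) (hnoedge : ∀ E, IsEdge Δ E → ¬∀ x ∈ E, x (Fin.last n) = a)
    {G : Set (Fin (n + 1) → ℝ)} (hGext : IsExtreme ℝ Δ G) {u : Fin (n + 1) → ℝ} {lam : ℝ}
    (hGhyp : ∀ x ∈ G, dotp x u = lam) (hu : u (Fin.last n) ≠ 0) :
    (G ∩ {x | x (Fin.last n) = a}).extremePoints ℝ = ∅ := by
  refine eq_empty_iff_forall_notMem.2 fun p hp => ?_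
  obtain ⟨hpG, hpa : p (Fin.last n) = a⟩ := hp.1
  have hpΔ := hGext.subset hpG
  have hpM := self_mem_minimalFace hpΔ
  have hMG : minimalFace Δ p ⊆ G := hGext.minimalFace_subset hpG
  have hhor : ∀ d ∈ vectorSpan ℝ (minimalFace Δ p), d (Fin.last n) = 0 → d = 0 :=
    fun d hd hd0 => eq_zero_of_mem_extremePoints_of_eventually_mem hp <|
      (eventually_add_smul_mem_minimalFace hΔ.convex hpΔ hd).mono
        fun t ht => ⟨hMG ht, by simp [hpa, hd0]⟩
  obtain ⟨v, hvM, hvp⟩ : ∃ v ∈ minimalFace Δ p, v ≠ p := by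
    by_contra! h
    have hMp : minimalFace Δ p = {p} := eq_singleton_iff_unique_mem.2 ⟨hpM, h⟩
    have := isExtreme_singleton.1 (hMp ▸ isExtreme_minimalFace hΔ.convex)
    exact hΔ.last_ne_of_mem_extremePoints hn hpar hnoedge this hpa
  have hvlast : v (Fin.last n) - p (Fin.last n) ≠ 0 := fun h =>
    hvp (sub_eq_zero.1 (hhor _ (vsub_mem_vectorSpan ℝ hvM hpM) (by simpa using h)))
  have hedge := isEdge_minimalFace hΔ.convex hpΔ (LinearMap.proj (Fin.last n)) hhor hvM hvp
  have hvert := hpar.2 _ hedge ⟨p, hpM, hpa⟩ (hnoedge _ hedge) v hvM p hpM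
  have := dotp_sub_dotp_of_castSucc_eq u hvert
  rw [hGhyp v (hMG hvM), hGhyp p hpG, sub_self] at this
  exact mul_ne_zero hvlast hu this.symm

end DelzantSlice

theorem facet_disjoint_from_parallel_slice_general
    (n : ℕ) (hn : 1 ≤ n) (Δ : Set (Fin (n + 1) → ℝ)) (a : ℝ)
    (hΔ : IsDelzant Δ) (hpar : IsParallelAt Δ a)
    (hnoedge : ∀ E : Set (Fin (n + 1) → ℝ), IsEdge Δ E →
      ¬(∀ x ∈ E, x (Fin.last n) = a))
    (G : Set (Fin (n + 1) → ℝ))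
    (hGext : IsExtreme ℝ Δ G) (hGconv : Convex ℝ G)
    (u : Fin (n + 1) → ℝ) (lam : ℝ)
    (hGhyp : ∀ x ∈ G, dotp x u = lam)
    (hu : u (Fin.last n) ≠ 0) :
    G ∩ {x : Fin (n + 1) → ℝ | x (Fin.last n) = a} = ∅ ∧
    ∃ δ : ℝ, 0 < δ ∧ ∀ x ∈ G, ∀ y ∈ Δ, y (Fin.last n) = a → δ ≤ dist x y := by
  have hGcomp := hΔ.isCompact_of_isExtreme hGext hGconv
  have hF : IsClosed {x : Fin (n + 1) → ℝ | x (Fin.last n) = a} :=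
    isClosed_eq (continuous_apply _) continuous_const
  have hdisj : G ∩ {x : Fin (n + 1) → ℝ | x (Fin.last n) = a} = ∅ := by
    by_contra hne
    have := (hGcomp.inter_right hF).extremePoints_nonempty (nonempty_iff_ne_empty.2 hne)
    rw [extremePoints_facet_inter_slice_eq_empty hn hΔ hpar hnoedge hGext hGhyp hu] at this
    exact not_nonempty_empty this
  obtain ⟨r, hr, hdist⟩ :=
    Metric.exists_pos_forall_lt_edist hGcomp hF (disjoint_iff_inter_eq_empty.2 hdisj)
  refine ⟨hdisj, r, hr, fun x hx y _ hy => ?_⟩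
  have hxy := hdist x hx y hy
  rw [edist_nndist] at hxy
  exact_mod_cast hxy.le

/-- Let `Δ ⊆ ℝ^{n+1}` (`n ≥ 1`) be a Delzant polytope and `F = {x | x_{n+1} = a}` a
parallel hyperplane for `Δ` meeting the interior of `Δ` and containing no edge of `Δ`.
If `G` is a facet of `Δ` (an `n`-dimensional face of the `(n+1)`-dimensional polytope)
contained in a hyperplane `{x | ⟨x, u⟩ = λ}` whose normal `u` satisfies
`⟨u, e_{n+1}⟩ ≠ 0`, then `G ∩ F = ∅`, and the slice `F ∩ Δ` has positive distance
from `G`. -/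
theorem facet_disjoint_from_parallel_slice
    (n : ℕ) (hn : 1 ≤ n) (Δ : Set (Fin (n + 1) → ℝ)) (a : ℝ)
    (hΔ : IsDelzant Δ) (hpar : IsParallelAt Δ a)
    (hint : ∃ x ∈ interior Δ, x (Fin.last n) = a)
    (hnoedge : ∀ E : Set (Fin (n + 1) → ℝ), IsEdge Δ E →
      ¬(∀ x ∈ E, x (Fin.last n) = a))
    (G : Set (Fin (n + 1) → ℝ))
    (hGext : IsExtreme ℝ Δ G) (hGconv : Convex ℝ G)
    (hGdim : Module.finrank ℝ (affineSpan ℝ G).direction = n)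
    (u : Fin (n + 1) → ℝ) (lam : ℝ)
    (hGhyp : ∀ x ∈ G, dotp x u = lam)
    (hu : u (Fin.last n) ≠ 0) :
    G ∩ {x : Fin (n + 1) → ℝ | x (Fin.last n) = a} = ∅ ∧
    ∃ δ : ℝ, 0 < δ ∧ ∀ x ∈ G, ∀ y ∈ Δ, y (Fin.last n) = a → δ ≤ dist x y :=
  facet_disjoint_from_parallel_slice_general n hn Δ a hΔ hpar hnoedge G hGext hGconv u lam hGhyp hu
end
end

section
/- Fix integers n ≥ 1 and 0 ≤ s < d. Let u₁,…,u_d ∈ ℝⁿ satisfy ⟨uᵢ, eₙ⟩ = 0 for all 1 ≤ i ≤ s and ⟨u_d, eₙ⟩ ≠ 0. Let β : ℝ^d → ℝⁿ be the linear map sending the standard basis vector eⱼ to uⱼ, and let 𝔫 = ker β. Suppose that for each index j with s < j < d there exist real numbers a_{j,0}, a_{j,1}, …, a_{j,s} such that the vector vⱼ := eⱼ − a_{j,0}·e_d − Σ_{i=1}^{s} a_{j,i}·eᵢ belongs to 𝔫. Then 𝔫 is the internal direct sum of the subspaces 𝔫 ∩ span{e₁,…,e_s} and span{vⱼ : s <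 j < d}; here 𝔫 ∩ span{e₁,…,e_s} is exactly the kernel of the restriction of β to span{e₁,…,e_s}. -/
/-!
The map `π x = ∑_{s ≤ j < m} x_j • v_j` is a projection onto `span {v_j}` that vanishes on
`span {e_i : i < s}`, because `v_j` has coordinate `δ_{jk}` at every middle index `k`.
For `x ∈ 𝔫`, the vector `y = x - π x` lies in `𝔫` and has no middle coordinates; the
`eₙ`-component of `β y = 0` is then `y_d ⟨u_d, eₙ⟩`, so `y_d = 0` as well and
`y ∈ span {e_i : i < s}`.
-/

noncomputable section

def betaMap {m n : ℕ} (u : Fin m → Fin n → ℝ) : (Fin m → ℝ) →ₗ[ℝ] (Fin n → ℝ) where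
  toFun x := ∑ j, x j • u j
  map_add' x y := by
    simp [add_smul, Finset.sum_add_distrib]
  map_smul' c x := by
    simp [Finset.smul_sum, smul_smul]

/-- The vector `v_j = e_j - a_{j,0} • e_d - ∑_{i < s} a_{j,i} • e_i` in `ℝ^d`
(`d = m + 1`, `e_d` the last standard basis vector). -/
def vvec {m : ℕ} (s : ℕ) (a0 : Fin (m + 1) → ℝ) (a : Fin (m + 1) → Fin (m + 1) → ℝ)
    (j : Fin (m + 1)) : Fin (m + 1) → ℝ :=
  (Pi.single j 1 : Fin (m + 1) → ℝ) -
    a0 j • (Pi.single (Fin.last m) 1 : Fin (m + 1) → ℝ) -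
    ∑ i ∈ Finset.univ.filter (fun i : Fin (m + 1) => (i : ℕ) < s),
      a j i • (Pi.single i 1 : Fin (m + 1) → ℝ)

def firstCoordSpan (m s : ℕ) : Submodule ℝ (Fin (m + 1) → ℝ) :=
  Submodule.span ℝ
    {x : Fin (m + 1) → ℝ | ∃ i : Fin (m + 1), (i : ℕ) < s ∧ x = Pi.single i 1}

namespace Submodule

variable {R M : Type*} [Ring R] [AddCommGroup M] [Module R M]

theorem disjoint_of_eqOn_zero_of_eqOn_self {W V : Submodule R M} (π : M →ₗ[R] M)
    (hW : ∀ x ∈ W, π x = 0) (hV : ∀ x ∈ V, π x = x) : Disjoint W V :=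
  disjoint_def.2 fun x hxW hxV => (hV x hxV).symm.trans (hW x hxW)

theorem inf_sup_eq_of_sub_mem {K W V : Submodule R M} (π : M →ₗ[R] M) (hVK : V ≤ K)
    (hπV : LinearMap.range π ≤ V) (hsub : ∀ x ∈ K, x - π x ∈ W) : K ⊓ W ⊔ V = K := by
  refine le_antisymm (sup_le inf_le_left hVK) fun x hxK => ?_
  have hπx : π x ∈ V := hπV (LinearMap.mem_range_self π x)
  rw [← sub_add_cancel x (π x)]
  exact add_mem (mem_sup_left ⟨sub_mem hxK (hVK hπx), hsub x hxK⟩) (mem_sup_right hπx)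

end Submodule

section KernelDecomposition

variable {n m s : ℕ}

lemma betaMap_apply_apply (u : Fin m → Fin n → ℝ) (x : Fin m → ℝ) (i : Fin n) :
    betaMap u x i = ∑ j, x j * u j i := by
  simp [betaMap]

lemma mem_firstCoordSpan_iff {x : Fin (m + 1) → ℝ} :
    x ∈ firstCoordSpan m s ↔ ∀ j : Fin (m + 1), s ≤ (j : ℕ) → x j = 0 := by
  have hset : {x : Fin (m + 1) → ℝ | ∃ i : Fin (m + 1), (i : ℕ) < s ∧ x = Pi.single i 1} =
      Pi.basisFun ℝ (Fin (m + 1)) '' {i | (i : ℕ) < s} := by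
    ext x
    simp [eq_comm]
  rw [firstCoordSpan, hset, Module.Basis.mem_span_image]
  simp only [Set.subset_def, Finset.mem_coe, Finsupp.mem_support_iff, Pi.basisFun_repr,
    Set.mem_ofPred_eq]
  exact forall_congr' fun j => by rw [← not_imp_not, not_lt, not_not]

variable (s) in
/-- The indices `s ≤ j < m`, i.e. `s < j < d` in the one-based numbering with `d = m + 1`. -/
def midIndices (m : ℕ) : Finset (Fin (m + 1)) :=
  Finset.univ.filter fun j => s ≤ (j : ℕ) ∧ (j : ℕ) < m

lemma mem_midIndices {j : Fin (m + 1)} : j ∈ midIndices s m ↔ s ≤ (j : ℕ) ∧ (j : ℕ) < m := by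
  simp [midIndices]

variable (a0 : Fin (m + 1) → ℝ) (a : Fin (m + 1) → Fin (m + 1) → ℝ)

lemma vvec_apply_of_mem_midIndices (j : Fin (m + 1)) {k : Fin (m + 1)}
    (hk : k ∈ midIndices s m) : vvec s a0 a j k = if k = j then 1 else 0 := by
  rw [mem_midIndices] at hk
  have hk_last : k ≠ Fin.last m := fun h => by simp [h] at hk
  simp [vvec, Finset.sum_apply, Pi.single_apply, hk_last, not_lt.2 hk.1]

variable (s) in
def vvecSpan : Submodule ℝ (Fin (m + 1) → ℝ) :=
  Submodule.span ℝ {x | ∃ j : Fin (m + 1), s ≤ (j : ℕ) ∧ (j : ℕ) < m ∧ x = vvec s a0 a j}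

variable (s) in
def midProj : (Fin (m + 1) → ℝ) →ₗ[ℝ] (Fin (m + 1) → ℝ) :=
  ∑ j ∈ midIndices s m, (LinearMap.proj j).smulRight (vvec s a0 a j)

lemma midProj_apply (x : Fin (m + 1) → ℝ) :
    midProj s a0 a x = ∑ j ∈ midIndices s m, x j • vvec s a0 a j := by
  simp [midProj]

lemma midProj_apply_apply_of_mem_midIndices (x : Fin (m + 1) → ℝ) {k : Fin (m + 1)}
    (hk : k ∈ midIndices s m) : midProj s a0 a x k = x k := by
  simp [midProj_apply, Finset.sum_apply, vvec_apply_of_mem_midIndices a0 a _ hk, hk]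

lemma midProj_eq_zero_of_mem_firstCoordSpan {x : Fin (m + 1) → ℝ}
    (hx : x ∈ firstCoordSpan m s) : midProj s a0 a x = 0 := by
  rw [mem_firstCoordSpan_iff] at hx
  rw [midProj_apply]
  exact Finset.sum_eq_zero fun j hj => by rw [hx j (mem_midIndices.1 hj).1, zero_smul]

lemma range_midProj_le : LinearMap.range (midProj s a0 a) ≤ vvecSpan s a0 a := by
  rintro _ ⟨x, rfl⟩
  rw [midProj_apply]
  refine Submodule.sum_mem _ fun j hj => Submodule.smul_mem _ _ (Submodule.subset_span ?_)
  obtain ⟨hsj, hjm⟩ := mem_midIndices.1 hj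
  exact ⟨j, hsj, hjm, rfl⟩

lemma midProj_eq_self_of_mem_vvecSpan {x : Fin (m + 1) → ℝ} (hx : x ∈ vvecSpan s a0 a) :
    midProj s a0 a x = x := by
  refine LinearMap.eqOn_span' (g := LinearMap.id) ?_ hx
  rintro _ ⟨j, hsj, hjm, rfl⟩
  have hj : j ∈ midIndices s m := mem_midIndices.2 ⟨hsj, hjm⟩
  rw [midProj_apply, Finset.sum_eq_single_of_mem j hj fun i hi hij => ?_]
  · simp [vvec_apply_of_mem_midIndices a0 a j hj]
  · simp [vvec_apply_of_mem_midIndices a0 a j hi, hij]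

variable {u : Fin (m + 1) → Fin (n + 1) → ℝ}

lemma vvecSpan_le_ker (hv : ∀ j : Fin (m + 1), s ≤ (j : ℕ) → (j : ℕ) < m →
      vvec s a0 a j ∈ LinearMap.ker (betaMap u)) :
    vvecSpan s a0 a ≤ LinearMap.ker (betaMap u) :=
  Submodule.span_le.2 fun _ ⟨j, hsj, hjm, hx⟩ => hx ▸ hv j hsj hjm

lemma mem_firstCoordSpan_of_mem_ker
    (hpar : ∀ i : Fin (m + 1), (i : ℕ) < s → u i (Fin.last n) = 0)
    (hlast : u (Fin.last m) (Fin.last n) ≠ 0)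
    {x : Fin (m + 1) → ℝ} (hx : x ∈ LinearMap.ker (betaMap u))
    (hmid : ∀ k ∈ midIndices s m, x k = 0) : x ∈ firstCoordSpan m s := by
  have hx_last : x (Fin.last m) = 0 := by
    have h : betaMap u x (Fin.last n) = 0 := by rw [LinearMap.mem_ker.1 hx]; rfl
    rw [betaMap_apply_apply, Finset.sum_eq_single (Fin.last m) (fun j _ hj => ?_) (by simp)] at h
    · exact (mul_eq_zero.1 h).resolve_right hlast
    · by_cases hjs : (j : ℕ) < s
      · simp [hpar j hjs]
      · simp [hmid j (mem_midIndices.2 ⟨not_lt.1 hjs, Fin.val_lt_last hj⟩)]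
  refine mem_firstCoordSpan_iff.2 fun k hk => ?_
  rcases eq_or_ne k (Fin.last m) with rfl | hk_last
  · exact hx_last
  · exact hmid k (mem_midIndices.2 ⟨hk, Fin.val_lt_last hk_last⟩)

lemma sub_midProj_mem_firstCoordSpan
    (hpar : ∀ i : Fin (m + 1), (i : ℕ) < s → u i (Fin.last n) = 0)
    (hlast : u (Fin.last m) (Fin.last n) ≠ 0)
    (hv : ∀ j : Fin (m + 1), s ≤ (j : ℕ) → (j : ℕ) < m →
      vvec s a0 a j ∈ LinearMap.ker (betaMap u))
    {x : Fin (m + 1) → ℝ} (hx : x ∈ LinearMap.ker (betaMap u)) :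
    x - midProj s a0 a x ∈ firstCoordSpan m s := by
  have hπx : midProj s a0 a x ∈ LinearMap.ker (betaMap u) :=
    vvecSpan_le_ker a0 a hv (range_midProj_le a0 a (LinearMap.mem_range_self _ x))
  refine mem_firstCoordSpan_of_mem_ker hpar hlast (sub_mem hx hπx) fun k hk => ?_
  rw [Pi.sub_apply, midProj_apply_apply_of_mem_midIndices a0 a x hk, sub_self]

end KernelDecomposition

theorem kernel_direct_sum_decomposition_general
    (n m s : ℕ)
    (u : Fin (m + 1) → Fin (n + 1) → ℝ)
    (hpar : ∀ i : Fin (m + 1), (i : ℕ) < s → u i (Fin.last n) = 0)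
    (hlast : u (Fin.last m) (Fin.last n) ≠ 0)
    (a0 : Fin (m + 1) → ℝ) (a : Fin (m + 1) → Fin (m + 1) → ℝ)
    (hv : ∀ j : Fin (m + 1), s ≤ (j : ℕ) → (j : ℕ) < m →
      vvec s a0 a j ∈ LinearMap.ker (betaMap u)) :
    Disjoint (LinearMap.ker (betaMap u) ⊓ firstCoordSpan m s)
      (Submodule.span ℝ
        {x : Fin (m + 1) → ℝ | ∃ j : Fin (m + 1),
          s ≤ (j : ℕ) ∧ (j : ℕ) < m ∧ x = vvec s a0 a j}) ∧
    (LinearMap.ker (betaMap u) ⊓ firstCoordSpan m s) ⊔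
      (Submodule.span ℝ
        {x : Fin (m + 1) → ℝ | ∃ j : Fin (m + 1),
          s ≤ (j : ℕ) ∧ (j : ℕ) < m ∧ x = vvec s a0 a j}) =
      LinearMap.ker (betaMap u) ∧
    LinearMap.ker (betaMap u) ⊓ firstCoordSpan m s =
      (LinearMap.ker ((betaMap u).domRestrict (firstCoordSpan m s))).map
        (firstCoordSpan m s).subtype := by
  have hdisj : Disjoint (firstCoordSpan m s) (vvecSpan s a0 a) :=
    Submodule.disjoint_of_eqOn_zero_of_eqOn_self (midProj s a0 a)
      (fun _ hx => midProj_eq_zero_of_mem_firstCoordSpan a0 a hx)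
      (fun _ hx => midProj_eq_self_of_mem_vvecSpan a0 a hx)
  refine ⟨hdisj.mono_left inf_le_right, ?_, ?_⟩
  · exact Submodule.inf_sup_eq_of_sub_mem (midProj s a0 a) (vvecSpan_le_ker a0 a hv)
      (range_midProj_le a0 a) fun _ hx => sub_midProj_mem_firstCoordSpan a0 a hpar hlast hv hx
  · rw [LinearMap.ker_domRestrict, Submodule.map_comap_subtype, inf_comm]

/-- Let `d = m + 1 > s ≥ 0` and let `u₁, …, u_d ∈ ℝ^{n+1}` satisfy `⟨u_i, e_{n+1}⟩ = 0`
for the first `s` indices and `⟨u_d, e_{n+1}⟩ ≠ 0`. Let `β : ℝ^d → ℝ^{n+1}` send `e_j`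
to `u_j` and let `𝔫 = ker β`. Suppose for each `j` with `s ≤ j < d - 1` the vector
`v_j = e_j - a_{j,0} e_d - ∑_{i<s} a_{j,i} e_i` lies in `𝔫`. Then `𝔫` is the internal
direct sum of `𝔫 ⊓ span{e₁,…,e_s}` and `span{v_j}`; moreover `𝔫 ⊓ span{e₁,…,e_s}` is
the kernel of the restriction of `β` to `span{e₁,…,e_s}`. -/
theorem kernel_direct_sum_decomposition
    (n m s : ℕ) (hs : s ≤ m)
    (u : Fin (m + 1) → Fin (n + 1) → ℝ)
    (hpar : ∀ i : Fin (m + 1), (i : ℕ) < s → u i (Fin.last n) = 0)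
    (hlast : u (Fin.last m) (Fin.last n) ≠ 0)
    (a0 : Fin (m + 1) → ℝ) (a : Fin (m + 1) → Fin (m + 1) → ℝ)
    (hv : ∀ j : Fin (m + 1), s ≤ (j : ℕ) → (j : ℕ) < m →
      vvec s a0 a j ∈ LinearMap.ker (betaMap u)) :
    Disjoint (LinearMap.ker (betaMap u) ⊓ firstCoordSpan m s)
      (Submodule.span ℝ
        {x : Fin (m + 1) → ℝ | ∃ j : Fin (m + 1),
          s ≤ (j : ℕ) ∧ (j : ℕ) < m ∧ x = vvec s a0 a j}) ∧
    (LinearMap.ker (betaMap u) ⊓ firstCoordSpan m s) ⊔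
      (Submodule.span ℝ
        {x : Fin (m + 1) → ℝ | ∃ j : Fin (m + 1),
          s ≤ (j : ℕ) ∧ (j : ℕ) < m ∧ x = vvec s a0 a j}) =
      LinearMap.ker (betaMap u) ∧
    LinearMap.ker (betaMap u) ⊓ firstCoordSpan m s =
      (LinearMap.ker ((betaMap u).domRestrict (firstCoordSpan m s))).map
        (firstCoordSpan m s).subtype :=
  kernel_direct_sum_decomposition_general n m s u hpar hlast a0 a hv
end
end
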